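/- arXiv:1708.02063 — 5 statements merged into one kernel-verified Lean document; each statement's English description precedes it below -/
import Mathlib

section
/- Let ≺ be a strict partial order on the set of genotypes {0,1}^n (n ≥ 1). Then every fitness landscape w : {0,1}^n → ℝ that strictly respects ≺ has positive n-way epistasis (i.e., Σ_{g even} w(g) − Σ_{g odd} w(g) > 0) if and only if there exists a bijection π from the set of odd genotypes to the set of even genotypes such that o ≺ π(o) for every odd genotype o. -/
/-- Genotypes of an `n`-locus biallelic system. -/
abbrev Genotype (n : ℕ) := Fin n → Bool

/-- The number of coordinates of a genotype equal to 1 (true). -/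
def dOnes {n : ℕ} (g : Genotype n) : ℕ :=
  (Finset.univ.filter (fun i => g i = true)).card

/-- The total `n`-way epistasis of a fitness landscape:
sum of fitnesses over even genotypes minus sum over odd genotypes. -/
noncomputable def epi (n : ℕ) (w : Genotype n → ℝ) : ℝ :=
  ∑ g ∈ Finset.univ.filter (fun g : Genotype n => Even (dOnes g)), w g -
    ∑ g ∈ Finset.univ.filter (fun g : Genotype n => Odd (dOnes g)), w g

/-!
If `π` matches every odd genotype with a larger even one, then
`u(w) = ∑ₒ (w (π o) - w o)` is a sum of positive terms. Conversely, fix one landscape `w₀`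
strictly respecting `≺` (the number of predecessors will do). Adding a constant `c` to `w₀`
changes `u` by `c (#even - #odd)`, and adding `c ≥ 0` on an up-closed set `T` changes it by
`c (#(T ∩ even) - #(T ∩ odd))`. Positivity of `u` on all these landscapes forces `#odd = #even`
and `#(T ∩ odd) ≤ #(T ∩ even)`. For `T` the up-closure of a set `S` of odd genotypes the latter
is Hall's condition for `S`, so Hall's marriage theorem gives an injective, hence bijective,
matching.
-/

open Finset

variable {α : Type*}

def StrictlyRespects (r : α → α → Prop) (w : α → ℝ) : Prop :=
  ∀ x y, r x y → w x < w y

section StrictlyRespects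

variable {r : α → α → Prop}

theorem exists_strictlyRespects [Fintype α] [IsTrans α r] [Std.Irrefl r] :
    ∃ w : α → ℝ, StrictlyRespects r w := by
  classical
  refine ⟨fun x => #{z | r z x}, fun x y hxy => ?_⟩
  have hlower : ({z | r z x} : Finset α) ⊂ ({z | r z y} : Finset α) := by
    refine (ssubset_iff_of_subset fun z hz => ?_).2 ⟨x, ?_, ?_⟩
    · simp only [mem_filter, mem_univ, true_and] at hz ⊢
      exact _root_.trans hz hxy
    · simpa using hxy
    · simpa using irrefl x
  exact Nat.cast_lt.2 (card_lt_card hlower)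

theorem StrictlyRespects.add_const {w : α → ℝ} (hw : StrictlyRespects r w) (c : ℝ) :
    StrictlyRespects r (fun x => w x + c) :=
  fun x y hxy => add_lt_add_left (hw x y hxy) c

theorem StrictlyRespects.add_ite_mem {w : α → ℝ} (hw : StrictlyRespects r w) [DecidableEq α]
    {T : Finset α} (hT : ∀ x y, x ∈ T → r x y → y ∈ T) {c : ℝ} (hc : 0 ≤ c) :
    StrictlyRespects r (fun x => w x + if x ∈ T then c else 0) := by
  intro x y hxy
  refine add_lt_add_of_lt_of_le (hw x y hxy) ?_
  by_cases hx : x ∈ T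
  · simp [hx, hT x y hx hxy]
  · split_ifs <;> simp [hc]

end StrictlyRespects

theorem nonneg_of_forall_nonneg_pos_add_mul {a b : ℝ} (h : ∀ c, 0 ≤ c → 0 < a + c * b) :
    0 ≤ b := by
  by_contra! hb
  have hpos := h (|a| / -b) (div_nonneg (abs_nonneg a) (neg_nonneg.2 hb.le))
  rw [div_mul_eq_mul_div, div_neg, mul_div_assoc, div_self hb.ne, mul_one] at hpos
  linarith [le_abs_self a]

theorem eq_zero_of_forall_pos_add_mul {a b : ℝ} (h : ∀ c, 0 < a + c * b) : b = 0 := by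
  refine le_antisymm ?_ (nonneg_of_forall_nonneg_pos_add_mul fun c _ => h c)
  have := nonneg_of_forall_nonneg_pos_add_mul (a := a) (b := -b) fun c _ => by
    simpa [neg_mul, mul_neg] using h (-c)
  linarith

section WeightGap

variable [Fintype α] (P Q : α → Prop) [DecidablePred P] [DecidablePred Q]

noncomputable def weightGap (w : α → ℝ) : ℝ :=
  ∑ x with Q x, w x - ∑ x with P x, w x

theorem weightGap_add_const (w : α → ℝ) (c : ℝ) :
    weightGap P Q (fun x => w x + c) = weightGap P Q w + c * (#{x | Q x} - #{x | P x}) := by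
  simp only [weightGap, sum_add_distrib, sum_const, nsmul_eq_mul]
  ring

theorem weightGap_add_ite_mem [DecidableEq α] (w : α → ℝ) (T : Finset α) (c : ℝ) :
    weightGap P Q (fun x => w x + if x ∈ T then c else 0) =
      weightGap P Q w + c * (#{x ∈ T | Q x} - #{x ∈ T | P x}) := by
  simp only [weightGap, sum_add_distrib, sum_ite_mem, sum_const, nsmul_eq_mul, filter_inter,
    univ_inter]
  ring

end WeightGap

section Matching

variable [Fintype α] {r : α → α → Prop} {P Q : α → Prop} [DecidablePred P] [DecidablePred Q]

theorem weightGap_pos_of_equiv [Nonempty {x // P x}] (π : {x // P x} ≃ {x // Q x})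
    (hπ : ∀ o : {x // P x}, r o (π o)) {w : α → ℝ} (hw : StrictlyRespects r w) :
    0 < weightGap P Q w := by
  have hsum : ∀ R : α → Prop, [DecidablePred R] → ∑ x with R x, w x = ∑ x : {x // R x}, w x :=
    fun R _ => sum_subtype _ (by simp) w
  rw [weightGap, hsum, hsum, ← π.sum_comp, ← sum_sub_distrib]
  exact sum_pos (fun o _ => sub_pos.2 (hw _ _ (hπ o))) univ_nonempty

variable [IsTrans α r] [Std.Irrefl r]
  (H : ∀ w, StrictlyRespects r w → 0 < weightGap P Q w)
include H

theorem card_filter_eq_of_forall_weightGap_pos : #{x | P x} = #{x | Q x} := by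
  obtain ⟨w, hw⟩ := exists_strictlyRespects (r := r)
  have hzero := eq_zero_of_forall_pos_add_mul fun c =>
    weightGap_add_const P Q w c ▸ H _ (hw.add_const c)
  exact_mod_cast (sub_eq_zero.1 hzero).symm

theorem card_filter_le_of_forall_weightGap_pos [DecidableEq α] {T : Finset α}
    (hT : ∀ x y, x ∈ T → r x y → y ∈ T) : #{x ∈ T | P x} ≤ #{x ∈ T | Q x} := by
  obtain ⟨w, hw⟩ := exists_strictlyRespects (r := r)
  have hnonneg := nonneg_of_forall_nonneg_pos_add_mul fun c hc =>
    weightGap_add_ite_mem P Q w T c ▸ H _ (hw.add_ite_mem hT hc)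
  exact_mod_cast sub_nonneg.1 hnonneg

theorem card_le_card_filter_rel_of_forall_weightGap_pos (hPQ : ∀ x, Q x → ¬ P x)
    [DecidableRel r] (S : Finset {x // P x}) :
    #S ≤ #{e : {x // Q x} | ∃ o ∈ S, r o e} := by
  classical
  let T : Finset α := {y | ∃ o ∈ S, o.1 = y ∨ r o y}
  have hT : ∀ x y, x ∈ T → r x y → y ∈ T := by
    simp only [T, mem_filter, mem_univ, true_and]
    rintro x y ⟨o, ho, rfl | hox⟩ hxy
    · exact ⟨o, ho, .inr hxy⟩
    · exact ⟨o, ho, .inr (_root_.trans hox hxy)⟩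
  calc #S = #(S.map (Function.Embedding.subtype _)) := (card_map _).symm
    _ ≤ #{x ∈ T | P x} := card_le_card fun x hx => by
      obtain ⟨o, ho, rfl⟩ := mem_map.1 hx
      exact mem_filter.2 ⟨mem_filter.2 ⟨mem_univ _, o, ho, .inl rfl⟩, o.2⟩
    _ ≤ #{x ∈ T | Q x} := card_filter_le_of_forall_weightGap_pos H hT
    _ ≤ #(({e : {x // Q x} | ∃ o ∈ S, r o e} : Finset _).map (Function.Embedding.subtype _)) :=
      card_le_card fun x hx => by
        simp only [T, mem_filter, mem_univ, true_and] at hx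
        obtain ⟨⟨o, ho, rfl | hox⟩, hQ⟩ := hx
        · exact absurd o.2 (hPQ _ hQ)
        · exact mem_map.2 ⟨⟨x, hQ⟩, mem_filter.2 ⟨mem_univ _, o, ho, hox⟩, rfl⟩
    _ = #{e : {x // Q x} | ∃ o ∈ S, r o e} := card_map _

theorem exists_equiv_of_forall_weightGap_pos (hPQ : ∀ x, Q x → ¬ P x) :
    ∃ π : {x // P x} ≃ {x // Q x}, ∀ o : {x // P x}, r o (π o) := by
  classical
  obtain ⟨f, hf, hrf⟩ := (Fintype.all_card_le_filter_rel_iff_exists_injective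
    fun (o : {x // P x}) (e : {x // Q x}) => r o e).1
      (card_le_card_filter_rel_of_forall_weightGap_pos H hPQ)
  have hcard : Fintype.card {x // P x} = Fintype.card {x // Q x} := by
    simpa only [Fintype.card_subtype] using card_filter_eq_of_forall_weightGap_pos H
  exact ⟨.ofBijective f ((Fintype.bijective_iff_injective_and_card f).2 ⟨hf, hcard⟩), hrf⟩

end Matching

theorem forall_weightGap_pos_iff_exists_equiv [Fintype α] [Nonempty α] {r : α → α → Prop}
    [IsTrans α r] [Std.Irrefl r] {P Q : α → Prop} [DecidablePred P] [DecidablePred Q]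
    (hPQ : ∀ x, Q x ↔ ¬ P x) :
    (∀ w, StrictlyRespects r w → 0 < weightGap P Q w) ↔
      ∃ π : {x // P x} ≃ {x // Q x}, ∀ o : {x // P x}, r o (π o) := by
  refine ⟨fun H => exists_equiv_of_forall_weightGap_pos H fun x => (hPQ x).1, ?_⟩
  rintro ⟨π, hπ⟩ w hw
  have : Nonempty {x // P x} := by
    obtain ⟨x⟩ := ‹Nonempty α›
    by_cases hx : P x
    · exact ⟨⟨x, hx⟩⟩
    · exact ⟨π.symm ⟨x, (hPQ x).2 hx⟩⟩
  exact weightGap_pos_of_equiv π hπ hw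

theorem partial_order_implies_epistasis_iff_matching_general
    (n : ℕ)
    (prec : Genotype n → Genotype n → Prop)
    (hpo : IsStrictOrder (Genotype n) prec) :
    (∀ w : Genotype n → ℝ, (∀ g h, prec g h → w g < w h) → 0 < epi n w) ↔
      (∃ π : {g : Genotype n // Odd (dOnes g)} ≃ {g : Genotype n // Even (dOnes g)},
        ∀ o, prec o.val (π o).val) :=
  forall_weightGap_pos_iff_exists_equiv fun _ => Nat.not_odd_iff_even.symm

theorem partial_order_implies_epistasis_iff_matching
    (n : ℕ) (hn : 1 ≤ n)
    (prec : Genotype n → Genotype n → Prop)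
    (hpo : IsStrictOrder (Genotype n) prec) :
    (∀ w : Genotype n → ℝ, (∀ g h, prec g h → w g < w h) → 0 < epi n w) ↔
      (∃ π : {g : Genotype n // Odd (dOnes g)} ≃ {g : Genotype n // Even (dOnes g)},
        ∀ o, prec o.val (π o).val) :=
  partial_order_implies_epistasis_iff_matching_general n prec hpo
end

section
/- Let r be an acyclic orientation of the n-dimensional hypercube graph Q_n on the genotypes {0,1}^n (a fitness graph), i.e., for every pair of genotypes at Hamming distance 1 exactly one of r g h, r h g holds, r relates only such pairs, and r admits no directed cycle. Then every fitness landscape w : {0,1}^n → ℝ compatible with r (meaning r g h implies w(g) < w(h)) has positive n-way epistasis if and only if there exists a bijection π from the odd genotypes to the even genotypes such that for every odd genotype o there is a directed path in r from o to π(o). -/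
/-!
Given the matching `π`, the epistasis is `∑ₒ (w (π o) - w o)`, a nonempty sum of positive terms.
Conversely, raising a compatible landscape by `c ≥ 0` on an `r`-closed set `U` keeps it compatible
and changes the epistasis by `c * (#(even ∩ U) - #(odd ∩ U))`; as acyclic `r` has compatible
landscapes, positivity for all of them forces `#(odd ∩ U) ≤ #(even ∩ U)`, and (shifting by arbitrary
constants) `#odd = #even`. For `U` generated by a set `S` of odd genotypes this inequality is Hall's
condition for the relation "reachable by a directed path", so Hall's marriage theorem gives an
injection from odd to even genotypes along paths, which is a bijection by the count.
-/

open Finset Relation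

def IsCompatible {α : Type*} (r : α → α → Prop) (w : α → ℝ) : Prop :=
  ∀ g h, r g h → w g < w h

namespace IsCompatible

variable {α : Type*} {r : α → α → Prop} {w : α → ℝ}

theorem lt_of_transGen (hw : IsCompatible r w) {a b : α} (hab : TransGen r a b) : w a < w b := by
  induction hab with
  | single h => exact hw _ _ h
  | tail _ h ih => exact ih.trans (hw _ _ h)

theorem add_indicator [DecidableEq α] (hw : IsCompatible r w) {U : Finset α}
    (hU : ∀ g h, r g h → g ∈ U → h ∈ U) {c : ℝ} (hc : 0 ≤ c) :
    IsCompatible r (fun g => w g + if g ∈ U then c else 0) := by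
  intro g h hgh
  have hle : (if g ∈ U then c else 0) ≤ if h ∈ U then c else 0 := by
    by_cases hg : g ∈ U
    · simp [hg, hU g h hgh hg]
    · split_ifs <;> simp [hc]
  exact add_lt_add_of_lt_of_le (hw g h hgh) hle

theorem add_const (hw : IsCompatible r w) (c : ℝ) : IsCompatible r (fun g => w g + c) :=
  fun g h hgh => add_lt_add_left (hw g h hgh) c

end IsCompatible

/-- The number of predecessors of a vertex strictly increases along the edges of an acyclic
relation. -/
theorem exists_isCompatible_of_acyclic {α : Type*} [Fintype α] {r : α → α → Prop}
    (hacyclic : ∀ g, ¬ TransGen r g g) : ∃ w : α → ℝ, IsCompatible r w := by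
  classical
  refine ⟨fun g => (univ.filter (fun x => ReflTransGen r x g)).card, fun g h hgh => ?_⟩
  have hssub : univ.filter (fun x => ReflTransGen r x g) ⊂
      univ.filter (fun x => ReflTransGen r x h) := by
    refine ssubset_iff_of_subset (fun x hx => ?_) |>.2 ⟨h, ?_, ?_⟩
    · simp only [mem_filter, mem_univ, true_and] at hx ⊢
      exact hx.tail hgh
    · simp [ReflTransGen.refl]
    · simp only [mem_filter, mem_univ, true_and]
      exact fun hhg => hacyclic g ((TransGen.single hgh).trans_left hhg)
  exact Nat.cast_lt.mpr (card_lt_card hssub)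

theorem int_nonneg_of_forall_pos_add_mul {a : ℝ} {k : ℤ} (h : ∀ c : ℝ, 0 ≤ c → 0 < a + c * k) :
    0 ≤ k := by
  by_contra! hk
  have hk' : (k : ℝ) ≤ -1 := by exact_mod_cast Int.le_sub_one_of_lt hk
  have := h |a| (abs_nonneg a)
  nlinarith [le_abs_self a, abs_nonneg a]

theorem int_eq_zero_of_forall_pos_add_mul {a : ℝ} {k : ℤ} (h : ∀ c : ℝ, 0 < a + c * k) :
    k = 0 := by
  refine le_antisymm ?_ (int_nonneg_of_forall_pos_add_mul fun c _ => h c)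
  have := int_nonneg_of_forall_pos_add_mul (a := a) (k := -k) fun c _ => by
    simpa using h (-c)
  omega

section Genotype

variable {n : ℕ}

def evens (n : ℕ) : Finset (Genotype n) := univ.filter fun g => Even (dOnes g)

def odds (n : ℕ) : Finset (Genotype n) := univ.filter fun g => Odd (dOnes g)

theorem epi_eq (w : Genotype n → ℝ) : epi n w = ∑ g ∈ evens n, w g - ∑ g ∈ odds n, w g := rfl

theorem epi_add_indicator (w : Genotype n → ℝ) (U : Finset (Genotype n)) (c : ℝ) :
    epi n (fun g => w g + if g ∈ U then c else 0) =
      epi n w + c * (((evens n ∩ U).card : ℤ) - (odds n ∩ U).card : ℤ) := by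
  simp only [epi_eq, sum_add_distrib, sum_ite_mem, sum_const, nsmul_eq_mul]
  push_cast
  ring

theorem epi_eq_sum_sub_of_equiv (w : Genotype n → ℝ)
    (π : {g : Genotype n // Odd (dOnes g)} ≃ {g : Genotype n // Even (dOnes g)}) :
    epi n w = ∑ o, (w (π o) - w o) := by
  rw [epi, sum_subtype (p := fun g => Even (dOnes g)) _ (by simp) w,
    sum_subtype (p := fun g => Odd (dOnes g)) _ (by simp) w, sum_sub_distrib,
    ← Equiv.sum_comp π (fun e => w e)]

variable {r : Genotype n → Genotype n → Prop} {w : Genotype n → ℝ}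

theorem card_odds_inter_le_of_forall_epi_pos (hpos : ∀ w, IsCompatible r w → 0 < epi n w)
    (hw : IsCompatible r w) {U : Finset (Genotype n)} (hU : ∀ g h, r g h → g ∈ U → h ∈ U) :
    (odds n ∩ U).card ≤ (evens n ∩ U).card := by
  have := int_nonneg_of_forall_pos_add_mul (a := epi n w) fun c hc => by
    rw [← epi_add_indicator]
    exact hpos _ (hw.add_indicator hU hc)
  omega

theorem card_evens_eq_card_odds_of_forall_epi_pos (hpos : ∀ w, IsCompatible r w → 0 < epi n w)
    (hw : IsCompatible r w) : (evens n).card = (odds n).card := by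
  have := int_eq_zero_of_forall_pos_add_mul (a := epi n w) fun c => by
    have hshift := epi_add_indicator w univ c
    simp only [mem_univ, if_true, inter_univ] at hshift
    rw [← hshift]
    exact hpos _ (hw.add_const c)
  omega

theorem exists_injective_transGen_of_forall_epi_pos (hpos : ∀ w, IsCompatible r w → 0 < epi n w)
    (hw : IsCompatible r w) :
    ∃ f : {g : Genotype n // Odd (dOnes g)} → {g : Genotype n // Even (dOnes g)},
      Function.Injective f ∧ ∀ o, TransGen r o.1 (f o).1 := by
  classical
  let t : {g : Genotype n // Odd (dOnes g)} → Finset {g : Genotype n // Even (dOnes g)} :=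
    fun o => univ.filter fun e => TransGen r o e
  suffices hall : ∀ s : Finset {g : Genotype n // Odd (dOnes g)}, s.card ≤ (s.biUnion t).card by
    obtain ⟨f, hf, hft⟩ := (all_card_le_biUnion_card_iff_exists_injective t).1 hall
    exact ⟨f, hf, fun o => by simpa [t] using hft o⟩
  intro s
  let U : Finset (Genotype n) := univ.filter fun g => ∃ o ∈ s, ReflTransGen r o g
  have hU : ∀ g h, r g h → g ∈ U → h ∈ U := by
    simp only [U, mem_filter, mem_univ, true_and]
    exact fun g h hgh ⟨o, ho, hog⟩ => ⟨o, ho, hog.tail hgh⟩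
  have hs : s.map (Function.Embedding.subtype _) ⊆ odds n ∩ U := by
    simp only [subset_iff, mem_map, Function.Embedding.coe_subtype, mem_inter, odds, U,
      mem_filter, mem_univ, true_and]
    rintro _ ⟨o, ho, rfl⟩
    exact ⟨o.2, o, ho, ReflTransGen.refl⟩
  have hN : evens n ∩ U ⊆ (s.biUnion t).map (Function.Embedding.subtype _) := by
    simp only [subset_iff, mem_map, Function.Embedding.coe_subtype, mem_inter, evens, U,
      mem_filter, mem_univ, true_and, mem_biUnion, t]
    rintro g ⟨hg, o, ho, hog⟩
    rcases reflTransGen_iff_eq_or_transGen.1 hog with rfl | hog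
    · exact absurd hg (Nat.not_even_iff_odd.2 o.2)
    · exact ⟨⟨g, hg⟩, ⟨o, ho, hog⟩, rfl⟩
  calc s.card = (s.map (Function.Embedding.subtype _)).card := (card_map _).symm
    _ ≤ (odds n ∩ U).card := card_le_card hs
    _ ≤ (evens n ∩ U).card := card_odds_inter_le_of_forall_epi_pos hpos hw hU
    _ ≤ ((s.biUnion t).map (Function.Embedding.subtype _)).card := card_le_card hN
    _ = (s.biUnion t).card := card_map _

end Genotype

theorem fitness_graph_implies_epistasis_iff_path_matching_general
    (n : ℕ)
    (r : Genotype n → Genotype n → Prop)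
    (hacyclic : ∀ g, ¬ Relation.TransGen r g g) :
    (∀ w : Genotype n → ℝ, (∀ g h, r g h → w g < w h) → 0 < epi n w) ↔
      (∃ π : {g : Genotype n // Odd (dOnes g)} ≃ {g : Genotype n // Even (dOnes g)},
        ∀ o, Relation.TransGen r o.val (π o).val) := by
  obtain ⟨w₀, hw₀⟩ := exists_isCompatible_of_acyclic hacyclic
  constructor
  · intro hpos
    obtain ⟨f, hf, hpath⟩ := exists_injective_transGen_of_forall_epi_pos hpos hw₀
    have hcard : Fintype.card {g : Genotype n // Odd (dOnes g)} =
        Fintype.card {g : Genotype n // Even (dOnes g)} := by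
      simpa only [Fintype.card_subtype, evens, odds] using
        (card_evens_eq_card_odds_of_forall_epi_pos hpos hw₀).symm
    exact ⟨.ofBijective f ((Fintype.bijective_iff_injective_and_card f).2 ⟨hf, hcard⟩), hpath⟩
  · rintro ⟨π, hπ⟩ w hw
    have : Nonempty {g : Genotype n // Odd (dOnes g)} :=
      ⟨π.symm ⟨fun _ => false, by simp [dOnes]⟩⟩
    rw [epi_eq_sum_sub_of_equiv w π]
    exact sum_pos (fun o _ => sub_pos.2 (IsCompatible.lt_of_transGen hw (hπ o))) univ_nonempty

theorem fitness_graph_implies_epistasis_iff_path_matching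
    (n : ℕ)
    (r : Genotype n → Genotype n → Prop)
    (hedge : ∀ g h, r g h → hammingDist g h = 1)
    (horient : ∀ g h : Genotype n, hammingDist g h = 1 → (r g h ↔ ¬ r h g))
    (hacyclic : ∀ g, ¬ Relation.TransGen r g g) :
    (∀ w : Genotype n → ℝ, (∀ g h, r g h → w g < w h) → 0 < epi n w) ↔
      (∃ π : {g : Genotype n // Odd (dOnes g)} ≃ {g : Genotype n // Even (dOnes g)},
        ∀ o, Relation.TransGen r o.val (π o).val) :=
  fitness_graph_implies_epistasis_iff_path_matching_general n r hacyclic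
end

section
/- For every n ≥ 3 there exists a fitness landscape w : {0,1}^n → ℝ such that (i) every conditional 3-way epistasis coefficient of w vanishes (w has only pairwise interactions), and (ii) the set of peaks of w is exactly the set of genotypes with exactly ⌊n/2⌋ coordinates equal to 1. Consequently, the maximal number of peaks among landscapes with no higher order epistasis is at least (n choose ⌊n/2⌋). -/
/-- A peak of a fitness landscape: a genotype of strictly higher fitness than
all of its mutational neighbors (genotypes at Hamming distance 1). -/
def isPeak {n : ℕ} (w : Genotype n → ℝ) (g : Genotype n) : Prop :=
  ∀ h : Genotype n, hammingDist g h = 1 → w h < w g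

/-- The conditional 3-way epistasis coefficient of `w` for the three loci
`i`, `j`, `k`, with the remaining loci fixed according to `c`. -/
def cond3 {n : ℕ} (w : Genotype n → ℝ) (i j k : Fin n) (c : Genotype n) : ℝ :=
  ∑ x : Bool × Bool × Bool,
    (-1 : ℝ) ^ (((if x.1 then 1 else 0) + (if x.2.1 then 1 else 0) +
        (if x.2.2 then 1 else 0) : ℕ)) *
      w (fun l => if l = i then x.1 else if l = j then x.2.1
          else if l = k then x.2.2 else c l)

/-!
The landscape `w g = -(#ones(g) - ⌊n/2⌋)²` depends on `g` only through its number of ones, as a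
quadratic polynomial. On a 3-dimensional subcube the number of ones is `s`, `s+1`, `s+2`, `s+3`
with multiplicities `1, 3, 3, 1`, so a conditional 3-way coefficient is minus the third forward
difference of that quadratic, which vanishes. A mutation changes the number of ones by exactly one,
so the peaks are exactly the genotypes on the level `⌊n/2⌋`, and there are `n choose ⌊n/2⌋` of them.
-/

open Finset Function fwdDiff

lemma fwdDiff_iter_three_apply {G : Type*} [AddCommGroup G] (f : ℕ → G) (s : ℕ) :
    (Δ_[1])^[3] f s = f (s + 3) - 3 • f (s + 2) + 3 • f (s + 1) - f s := by
  simp only [iterate_succ_apply', iterate_zero_apply, fwdDiff, add_assoc, Nat.reduceAdd]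
  abel

lemma fwdDiff_iter_three_neg_sq_sub (m : ℝ) :
    (Δ_[1])^[3] (fun d : ℕ => -((d : ℝ) - m) ^ 2) = 0 := by
  ext s
  rw [fwdDiff_iter_three_apply, Pi.zero_apply]
  push_cast
  ring

lemma dOnes_eq_sum_toNat {n : ℕ} (g : Genotype n) : dOnes g = ∑ l, (g l).toNat := by
  rw [dOnes, card_filter]
  exact sum_congr rfl fun l _ => by cases g l <;> rfl

lemma dOnes_update_add_toNat {n : ℕ} (g : Genotype n) (i : Fin n) (b : Bool) :
    dOnes (update g i b) + (g i).toNat = dOnes g + b.toNat := by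
  have hrest : ∑ l ∈ univ.erase i, (update g i b l).toNat = ∑ l ∈ univ.erase i, (g l).toNat :=
    sum_congr rfl fun l hl => by rw [update_of_ne (ne_of_mem_erase hl)]
  rw [dOnes_eq_sum_toNat, dOnes_eq_sum_toNat, ← add_sum_erase _ _ (mem_univ i),
    ← add_sum_erase _ _ (mem_univ i), hrest, update_self]
  ring

lemma hammingDist_eq_one_iff {ι : Type*} [Fintype ι] [DecidableEq ι] {g h : ι → Bool} :
    hammingDist g h = 1 ↔ ∃ i, h = update g i (!g i) := by
  rw [hammingDist, card_eq_one]
  constructor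
  · rintro ⟨i, hi⟩
    have hdiff : ∀ l, g l ≠ h l ↔ l = i := fun l => by simpa using congrArg (l ∈ ·) hi
    refine ⟨i, funext fun l => ?_⟩
    rcases eq_or_ne l i with rfl | hl
    · have := (hdiff l).2 rfl
      rw [update_self]
      revert this
      cases g l <;> cases h l <;> simp
    · rw [update_of_ne hl]
      exact (not_not.1 ((hdiff l).not.2 hl)).symm
  · rintro ⟨i, rfl⟩
    exact ⟨i, by ext l; rcases eq_or_ne l i with rfl | hl <;> simp [*]⟩

lemma isPeak_iff_forall_flip {n : ℕ} (w : Genotype n → ℝ) (g : Genotype n) :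
    isPeak w g ↔ ∀ i, w (update g i (!g i)) < w g := by
  simp only [isPeak, hammingDist_eq_one_iff]
  exact ⟨fun h i => h _ ⟨i, rfl⟩, by rintro h _ ⟨i, rfl⟩; exact h i⟩

lemma dOnes_ite_three {n : ℕ} {i j k : Fin n} (hij : i ≠ j) (hik : i ≠ k) (hjk : j ≠ k)
    (c : Genotype n) (a b d : Bool) :
    dOnes (fun l => if l = i then a else if l = j then b else if l = k then d else c l) =
      a.toNat + b.toNat + d.toNat + ∑ l ∈ {i, j, k}ᶜ, (c l).toNat := by
  rw [dOnes_eq_sum_toNat, ← sum_add_sum_compl {i, j, k}, sum_insert (by simp [hij, hik]),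
    sum_pair hjk]
  congr 1
  · simp [hij.symm, hik.symm, hjk.symm, add_assoc]
  · exact sum_congr rfl fun l hl => by
      simp only [mem_compl, mem_insert, mem_singleton, not_or] at hl
      simp [hl.1, hl.2.1, hl.2.2]

lemma cond3_comp_dOnes (f : ℕ → ℝ) {n : ℕ} {i j k : Fin n} (hij : i ≠ j) (hik : i ≠ k)
    (hjk : j ≠ k) (c : Genotype n) :
    cond3 (fun g => f (dOnes g)) i j k c = -(Δ_[1])^[3] f (∑ l ∈ {i, j, k}ᶜ, (c l).toNat) := by
  simp only [cond3, fwdDiff_iter_three_apply, Fintype.sum_prod_type, Fintype.sum_bool,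
    dOnes_ite_three hij hik hjk, Bool.toNat_true, Bool.toNat_false, Bool.false_eq_true,
    ↓reduceIte, nsmul_eq_mul]
  ring_nf

noncomputable def levelLandscape {n : ℕ} (m : ℕ) (g : Genotype n) : ℝ :=
  -((dOnes g : ℝ) - m) ^ 2

lemma cond3_levelLandscape {n : ℕ} (m : ℕ) {i j k : Fin n} (hij : i ≠ j) (hik : i ≠ k)
    (hjk : j ≠ k) (c : Genotype n) : cond3 (levelLandscape m) i j k c = 0 := by
  have h := cond3_comp_dOnes (fun d : ℕ => -((d : ℝ) - m) ^ 2) hij hik hjk c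
  rwa [fwdDiff_iter_three_neg_sq_sub, Pi.zero_apply, neg_zero] at h

lemma cast_dOnes_flip {n : ℕ} (g : Genotype n) (i : Fin n) :
    (dOnes (update g i (!g i)) : ℝ) = dOnes g + if g i then -1 else 1 := by
  have h : (dOnes (update g i (!g i)) : ℝ) + (g i).toNat = dOnes g + (!g i).toNat := by
    exact_mod_cast dOnes_update_add_toNat g i (!g i)
  cases hg : g i <;> simp [hg] at h ⊢ <;> linarith

lemma exists_eq_false_of_dOnes_lt {n : ℕ} {g : Genotype n} (h : dOnes g < n) :
    ∃ i, g i = false := by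
  by_contra! hg
  simp [dOnes, hg] at h

lemma exists_eq_true_of_dOnes_pos {n : ℕ} {g : Genotype n} (h : 0 < dOnes g) :
    ∃ i, g i = true := by
  obtain ⟨i, hi⟩ := card_pos.1 h
  exact ⟨i, (mem_filter.1 hi).2⟩

lemma isPeak_levelLandscape_iff {n m : ℕ} (hm : m ≤ n) (g : Genotype n) :
    isPeak (levelLandscape m) g ↔ dOnes g = m := by
  simp only [isPeak_iff_forall_flip, levelLandscape, cast_dOnes_flip]
  constructor
  · intro hpeak
    by_contra hne
    rcases lt_or_gt_of_ne hne with hlt | hgt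
    · obtain ⟨i, hi⟩ := exists_eq_false_of_dOnes_lt (hlt.trans_le hm)
      have hup := hpeak i
      have hlt' : (dOnes g : ℝ) + 1 ≤ m := by exact_mod_cast hlt
      simp only [hi, Bool.false_eq_true, ↓reduceIte] at hup
      nlinarith
    · obtain ⟨i, hi⟩ := exists_eq_true_of_dOnes_pos (Nat.zero_lt_of_lt hgt)
      have hdown := hpeak i
      have hgt' : (m : ℝ) + 1 ≤ dOnes g := by exact_mod_cast hgt
      simp only [hi, ↓reduceIte] at hdown
      nlinarith
  · intro hd i
    rw [hd]
    split_ifs <;> norm_num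

lemma ncard_setOf_dOnes_eq (n m : ℕ) : {g : Genotype n | dOnes g = m}.ncard = n.choose m := by
  have hchoose : n.choose m = (powersetCard m (univ : Finset (Fin n))).card := by simp
  rw [hchoose, ← Set.ncard_coe_finset]
  refine Set.ncard_congr (fun g _ => univ.filter (g · = true)) ?_ ?_ ?_
  · intro g hg
    simpa [mem_powersetCard, dOnes] using hg
  · intro g h _ _ hgh
    funext l
    simpa using congrArg (l ∈ ·) hgh
  · intro s hs
    refine ⟨fun l => decide (l ∈ s), ?_, ?_⟩
    · simp_all [dOnes]
    · ext; simp

theorem exists_pairwise_landscape_with_many_peaks_general (n : ℕ) :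
    ∃ w : Genotype n → ℝ,
      (∀ i j k : Fin n, i ≠ j → i ≠ k → j ≠ k →
        ∀ c : Genotype n, cond3 w i j k c = 0) ∧
      (∀ g : Genotype n, isPeak w g ↔ dOnes g = n / 2) ∧
      n.choose (n / 2) ≤ {g : Genotype n | isPeak w g}.ncard := by
  have hpeak := isPeak_levelLandscape_iff (Nat.div_le_self n 2)
  refine ⟨levelLandscape (n / 2), fun i j k hij hik hjk c => cond3_levelLandscape _ hij hik hjk c,
    hpeak, ?_⟩
  simp only [hpeak, ncard_setOf_dOnes_eq, le_refl]

theorem exists_pairwise_landscape_with_many_peaks (n : ℕ) (hn : 3 ≤ n) :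
    ∃ w : Genotype n → ℝ,
      (∀ i j k : Fin n, i ≠ j → i ≠ k → j ≠ k →
        ∀ c : Genotype n, cond3 w i j k c = 0) ∧
      (∀ g : Genotype n, isPeak w g ↔ dOnes g = n / 2) ∧
      n.choose (n / 2) ≤ {g : Genotype n | isPeak w g}.ncard :=
  exists_pairwise_landscape_with_many_peaks_general n
end

section
/- Every fitness landscape w : {0,1}^4 → ℝ all of whose conditional 3-way epistasis coefficients vanish (i.e., w has only pairwise interactions) has at most 6 peaks. -/
/-!
Slice the 4-cube along locus 0 into two 3-cubes; a peak of `w` is a peak of the slice containing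
it, and each slice inherits a vanishing alternating sum `cond3`. In the 3-cube, four pairwise
non-adjacent vertices form a parity class. If all four were peaks, each would beat its neighbour
across locus 0, and these neighbours make up the other parity class, so the alternating sum would
be nonzero. Hence each slice has at most 3 peaks.
-/

section Slices

variable {n : ℕ}

theorem isPeak.hammingDist_ne_one {w : Genotype n → ℝ} {g h : Genotype n}
    (hg : isPeak w g) (hh : isPeak w h) : hammingDist g h ≠ 1 := fun hd =>
  (hg h hd).not_gt (hh g (hammingDist_comm g h ▸ hd))

theorem hammingDist_cons (b : Bool) (x y : Genotype n) :
    hammingDist (Fin.cons b x : Genotype (n + 1)) (Fin.cons b y) = hammingDist x y := by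
  simp only [hammingDist, Finset.card_filter, Fin.sum_univ_succ, Fin.cons_zero, Fin.cons_succ,
    ne_eq, not_true_eq_false, if_false, zero_add]

theorem isPeak.restrict_cons {w : Genotype (n + 1) → ℝ} {b : Bool} {x : Genotype n}
    (hx : isPeak w (Fin.cons b x)) : isPeak (fun y => w (Fin.cons b y)) x := fun y hy =>
  hx _ (by rwa [hammingDist_cons])

theorem cond3_cons (w : Genotype (n + 1) → ℝ) (b : Bool) (i j k : Fin n) (c : Genotype n) :
    cond3 (fun y => w (Fin.cons b y)) i j k c = cond3 w i.succ j.succ k.succ (Fin.cons b c) := by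
  unfold cond3
  congr! 3 with x
  funext l
  cases l using Fin.cases <;> simp [Fin.succ_ne_zero, eq_comm (a := (0 : Fin (n + 1)))]

theorem ncard_setOf_isPeak_le_two_mul {w : Genotype (n + 1) → ℝ} {m : ℕ}
    (hm : ∀ b, {x | isPeak (fun y => w (Fin.cons b y)) x}.ncard ≤ m) :
    {g | isPeak w g}.ncard ≤ 2 * m := by
  let slicePeaks (b : Bool) : Set (Genotype (n + 1)) :=
    Fin.cons b '' {x | isPeak (fun y => w (Fin.cons b y)) x}
  have hcover : {g | isPeak w g} ⊆ slicePeaks false ∪ slicePeaks true := by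
    intro g hg
    obtain ⟨b, x, rfl⟩ : ∃ b x, g = Fin.cons b x := ⟨g 0, Fin.tail g, (Fin.cons_self_tail g).symm⟩
    cases b
    exacts [Or.inl ⟨_, isPeak.restrict_cons hg, rfl⟩, Or.inr ⟨_, isPeak.restrict_cons hg, rfl⟩]
  calc {g | isPeak w g}.ncard
      ≤ (slicePeaks false ∪ slicePeaks true).ncard := Set.ncard_le_ncard hcover
    _ ≤ (slicePeaks false).ncard + (slicePeaks true).ncard := Set.ncard_union_le _ _
    _ ≤ m + m := add_le_add ((Set.ncard_image_le).trans (hm _)) ((Set.ncard_image_le).trans (hm _))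
    _ = 2 * m := (two_mul m).symm

end Slices

theorem cond3_zero_one_two (v : Genotype 3 → ℝ) (c : Genotype 3) :
    cond3 v 0 1 2 c =
      v ![false, false, false] + v ![true, true, false] + v ![true, false, true]
        + v ![false, true, true] - v ![true, false, false] - v ![false, true, false]
        - v ![false, false, true] - v ![true, true, true] := by
  have hpoint : ∀ x₀ x₁ x₂ : Bool, (fun l : Fin 3 => if l = 0 then x₀ else if l = 1 then x₁
      else if l = 2 then x₂ else c l) = ![x₀, x₁, x₂] := by
    intro x₀ x₁ x₂
    funext l
    fin_cases l <;> rfl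
  simp only [cond3, Fintype.sum_prod_type, Fintype.sum_bool, hpoint]
  norm_num
  ring

set_option maxRecDepth 100000 in
theorem eq_even_or_odd_of_card_eq_four :
    ∀ T : Finset (Genotype 3), T.card = 4 → (∀ x ∈ T, ∀ y ∈ T, hammingDist x y ≠ 1) →
      T = {![false, false, false], ![true, true, false], ![true, false, true],
          ![false, true, true]} ∨
      T = {![true, false, false], ![false, true, false], ![false, false, true],
          ![true, true, true]} := by
  decide

theorem ncard_setOf_isPeak_le_three {v : Genotype 3 → ℝ} {c : Genotype 3}
    (hv : cond3 v 0 1 2 c = 0) : {x | isPeak v x}.ncard ≤ 3 := by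
  classical
  by_contra! hfour
  rw [Set.ncard_eq_toFinset_card'] at hfour
  obtain ⟨T, hTpeak, hTcard⟩ := Finset.exists_subset_card_eq hfour
  have hpeak : ∀ x ∈ T, isPeak v x := fun x hx => Set.mem_toFinset.mp (hTpeak hx)
  have hexp := cond3_zero_one_two v c
  rcases eq_even_or_odd_of_card_eq_four T hTcard
    (fun x hx y hy => (hpeak x hx).hammingDist_ne_one (hpeak y hy)) with rfl | rfl
  · linarith [hpeak ![false, false, false] (by decide) ![true, false, false] (by decide),
      hpeak ![true, true, false] (by decide) ![false, true, false] (by decide),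
      hpeak ![true, false, true] (by decide) ![false, false, true] (by decide),
      hpeak ![false, true, true] (by decide) ![true, true, true] (by decide)]
  · linarith [hpeak ![true, false, false] (by decide) ![false, false, false] (by decide),
      hpeak ![false, true, false] (by decide) ![true, true, false] (by decide),
      hpeak ![false, false, true] (by decide) ![true, false, true] (by decide),
      hpeak ![true, true, true] (by decide) ![false, true, true] (by decide)]

theorem pairwise_four_locus_at_most_six_peaks
    (w : Genotype 4 → ℝ)
    (h : ∀ i j k : Fin 4, i ≠ j → i ≠ k → j ≠ k →
      ∀ c : Genotype 4, cond3 w i j k c = 0) :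
    {g : Genotype 4 | isPeak w g}.ncard ≤ 6 :=
  ncard_setOf_isPeak_le_two_mul (m := 3) fun b =>
    ncard_setOf_isPeak_le_three (c := ![false, false, false]) <| by
      rw [cond3_cons]
      exact h _ _ _ (by decide) (by decide) (by decide) _
end

section
/- Every fitness landscape w : {0,1}^3 → ℝ whose (total) 3-way epistasis coefficient vanishes, i.e., w(000) + w(011) + w(101) + w(110) − w(001) − w(010) − w(100) − w(111) = 0, has at most 3 peaks. -/
section

variable {n : ℕ}

def mutate (i : Fin n) (g : Genotype n) : Genotype n :=
  Function.update g i (!g i)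

theorem mutate_involutive (i : Fin n) : Function.Involutive (mutate i) := by
  intro g
  simp [mutate]

theorem hammingDist_mutate_self (i : Fin n) (g : Genotype n) :
    hammingDist g (mutate i g) = 1 := by
  rw [hammingDist, Finset.card_eq_one]
  refine ⟨i, Finset.ext fun j => ?_⟩
  rw [Finset.mem_filter, Finset.mem_singleton]
  rcases eq_or_ne j i with rfl | hj <;> simp [mutate, *]

theorem hammingDist_mutate_add_one {i : Fin n} {g h : Genotype n} (hi : g i ≠ h i) :
    hammingDist g (mutate i h) + 1 = hammingDist g h := by
  have hfilter : ({j | g j ≠ mutate i h j} : Finset (Fin n)) =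
      ({j | g j ≠ h j} : Finset (Fin n)).erase i := by
    ext j
    rw [Finset.mem_erase, Finset.mem_filter, Finset.mem_filter]
    rcases eq_or_ne j i with rfl | hj
    · simpa [mutate] using hi
    · simp [mutate, hj]
  rw [hammingDist, hammingDist, hfilter, Finset.card_erase_add_one (by simpa using hi)]

theorem iff_even_hammingDist_of_mutate {p : Genotype n → Prop}
    (hp : ∀ i g, p (mutate i g) ↔ ¬ p g) (g h : Genotype n) :
    p h ↔ (p g ↔ Even (hammingDist g h)) := by
  induction hd : hammingDist g h generalizing h with
  | zero => simp [hammingDist_eq_zero.mp hd]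
  | succ k ih =>
    obtain ⟨i, hi⟩ : ∃ i, g i ≠ h i := by
      by_contra! hgh
      simp [funext hgh] at hd
    have hk := ih (mutate i h) (by have := hammingDist_mutate_add_one hi; omega)
    rw [← mutate_involutive i h, hp, hk, Nat.even_add_one]
    tauto

theorem not_isPeak_mutate {w : Genotype n → ℝ} {g : Genotype n} (hg : isPeak w g) (i : Fin n) :
    ¬ isPeak w (mutate i g) := fun hm =>
  (hg _ (hammingDist_mutate_self i g)).not_gt
    (hm g (by rw [hammingDist_comm]; exact hammingDist_mutate_self i g))

theorem isPeak_mutate_iff {w : Genotype n → ℝ}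
    (hhalf : 2 ^ n ≤ 2 * {g | isPeak w g}.ncard) (i : Fin n) (g : Genotype n) :
    isPeak w (mutate i g) ↔ ¬ isPeak w g := by
  set peaks := {g | isPeak w g}
  have himage : mutate i '' peaks = peaksᶜ := by
    refine Set.eq_of_subset_of_ncard_le ?_ ?_
    · rintro _ ⟨g, hg, rfl⟩
      exact not_isPeak_mutate hg i
    · have hcard := Set.ncard_add_ncard_compl peaks
      simp only [Nat.card_eq_fintype_card, Fintype.card_fun, Fintype.card_bool,
        Fintype.card_fin] at hcard
      rw [Set.ncard_image_of_injective _ (mutate_involutive i).injective]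
      omega
  refine ⟨fun hm hg => not_isPeak_mutate hg i hm, fun hg => ?_⟩
  obtain ⟨g', hg', rfl⟩ : g ∈ mutate i '' peaks := himage ▸ hg
  rwa [mutate_involutive i g']

end

theorem no_three_way_epistasis_at_most_three_peaks
    (w : Genotype 3 → ℝ)
    (h : w ![false, false, false] + w ![false, true, true] +
        w ![true, false, true] + w ![true, true, false] -
        w ![false, false, true] - w ![false, true, false] -
        w ![true, false, false] - w ![true, true, true] = 0) :
    {g : Genotype 3 | isPeak w g}.ncard ≤ 3 := by
  by_contra! hmany
  have hparity := iff_even_hammingDist_of_mutate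
    (isPeak_mutate_iff (w := w) (by omega)) ![false, false, false]
  by_cases h000 : isPeak w ![false, false, false]
  · have hpeak : ∀ g, Even (hammingDist ![false, false, false] g) → isPeak w g :=
      fun g hg => (hparity g).2 (iff_of_true h000 hg)
    linarith [h000 ![false, false, true] (by decide),
      hpeak ![false, true, true] (by decide) ![false, true, false] (by decide),
      hpeak ![true, false, true] (by decide) ![true, false, false] (by decide),
      hpeak ![true, true, false] (by decide) ![true, true, true] (by decide)]
  · have hpeak : ∀ g, ¬ Even (hammingDist ![false, false, false] g) → isPeak w g :=
      fun g hg => (hparity g).2 (iff_of_false h000 hg)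
    linarith [hpeak ![false, false, true] (by decide) ![false, false, false] (by decide),
      hpeak ![false, true, false] (by decide) ![false, true, true] (by decide),
      hpeak ![true, false, false] (by decide) ![true, false, true] (by decide),
      hpeak ![true, true, true] (by decide) ![true, true, false] (by decide)]
end
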